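/- Let n ≥ 1 and r ≥ 2 be integers, let σ ∈ {−1,0,1}^n with σ ≠ 0, let i ∈ {1,…,n} and let a ∈ ℝ be such that σ + a·e_i ∈ {−1,0,1}^n. Then ‖(σ + a e_i)^{⊗r} − σ^{⊗r}‖_F ≤ C_Noise · |a| · ‖σ‖₀^{(r−1)/2}, where C_Noise = (Σ_{j=1}^r binom(r,j)² · 2^{2j})^{1/2}, ‖σ‖₀ is the number of nonzero coordinates of σ, and the Frobenius norm is ‖T‖_F = (Σ_{f : Fin r → Fin n} T(f)²)^{1/2} with (u^{⊗r})(f) = ∏_l u(f(l)). -/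

import Mathlib

/-!
Write τ = σ + a e_i. Since τ and σ agree off `i`, the entry of τ^{⊗r} − σ^{⊗r} at an index
`f : Fin r → Fin n` vanishes unless `f` hits `i`, and it also vanishes if `f` leaves `supp σ ∪ {i}`.
So at most r (‖σ‖₀ + 1)^{r−1} ≤ r 2^{r−1} ‖σ‖₀^{r−1} entries are nonzero. Each has absolute value at
most 2 ≤ 2|a|: all entries of τ and σ lie in {−1, 0, 1}, so a nonzero `a = τ i − σ i` has `|a| ≥ 1`.
Finally 4 r 2^{r−1} ≤ 4^r, the `j = r` term of C_Noise².
-/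

open Finset

/-- Number of nonzero coordinates of a vector (the "ℓ₀ norm"). -/
noncomputable def suppCard {n : ℕ} (σ : Fin n → ℝ) : ℕ :=
  (Finset.univ.filter (fun m => σ m ≠ 0)).card

/-- The constant C_Noise = (Σ_{j=1}^r binom(r,j)² 2^{2j})^{1/2}. -/
noncomputable def CNoise (r : ℕ) : ℝ :=
  Real.sqrt (∑ j ∈ Finset.Icc 1 r, ((r.choose j : ℝ)) ^ 2 * 2 ^ (2 * j))

theorem one_le_abs_sub_of_trit {x y : ℝ} (hx : x = -1 ∨ x = 0 ∨ x = 1)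
    (hy : y = -1 ∨ y = 0 ∨ y = 1) (hxy : x ≠ y) : 1 ≤ |x - y| := by
  rcases hx with rfl | rfl | rfl <;> rcases hy with rfl | rfl | rfl <;> norm_num at hxy <;> norm_num

theorem abs_le_one_of_trit {x : ℝ} (hx : x = -1 ∨ x = 0 ∨ x = 1) : |x| ≤ 1 := by
  rcases hx with rfl | rfl | rfl <;> norm_num

theorem abs_prod_comp_le_one {ι κ : Type*} [Fintype ι] {u : κ → ℝ} (hu : ∀ m, |u m| ≤ 1)
    (f : ι → κ) :
    |∏ l, u (f l)| ≤ 1 := by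
  rw [abs_prod]
  exact prod_le_one (fun _ _ => abs_nonneg _) fun l _ => hu (f l)

theorem sq_sub_le_four {x y : ℝ} (hx : |x| ≤ 1) (hy : |y| ≤ 1) : (x - y) ^ 2 ≤ 4 := by
  rw [abs_le] at hx hy
  nlinarith

theorem four_mul_mul_succ_pow_le (r s : ℕ) (hs : 1 ≤ s) :
    4 * r * (s + 1) ^ (r - 1) ≤ 4 ^ r * s ^ (r - 1) := by
  obtain _ | k := r
  · simp
  have hk : k + 1 ≤ 2 ^ k := Nat.lt_two_pow_self
  calc 4 * (k + 1) * (s + 1) ^ k ≤ 4 * 2 ^ k * (2 * s) ^ k := by gcongr; omega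
    _ = 4 ^ (k + 1) * s ^ k := by
      rw [mul_pow, pow_succ', show (4 : ℕ) = 2 ^ 2 by rfl, ← pow_mul]; ring

theorem four_pow_le_CNoise_sq {r : ℕ} (hr : 1 ≤ r) : (4 : ℝ) ^ r ≤ CNoise r ^ 2 := by
  rw [CNoise, Real.sq_sqrt (sum_nonneg fun j _ => by positivity)]
  calc (4 : ℝ) ^ r = (r.choose r : ℝ) ^ 2 * 2 ^ (2 * r) := by simp [pow_mul]; norm_num
    _ ≤ _ := single_le_sum (f := fun j => (r.choose j : ℝ) ^ 2 * 2 ^ (2 * j))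
      (fun j _ => by positivity) (mem_Icc.mpr ⟨hr, le_rfl⟩)

theorem rpow_sub_one_div_two_sq {x : ℝ} (hx : 0 ≤ x) {r : ℕ} (hr : 1 ≤ r) :
    (x ^ (((r : ℝ) - 1) / 2)) ^ 2 = x ^ (r - 1) := by
  rw [← Real.rpow_mul_natCast hx, ← Real.rpow_natCast]
  push_cast [hr]
  ring_nf

section Counting

variable {ι κ : Type*} [Fintype ι] [Fintype κ] [DecidableEq κ] {σ τ : κ → ℝ} {i : κ}

theorem exists_eq_forall_mem_of_prod_ne (hτσ : ∀ m ≠ i, τ m = σ m) {f : ι → κ}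
    (hf : ∏ l, τ (f l) ≠ ∏ l, σ (f l)) :
    ∃ l₀, f l₀ = i ∧ ∀ l, f l ∈ insert i ({m | σ m ≠ 0} : Finset κ) := by
  obtain ⟨l₀, hl₀⟩ : ∃ l₀, f l₀ = i := by
    by_contra! h
    exact hf (prod_congr rfl fun l _ => hτσ _ (h l))
  refine ⟨l₀, hl₀, fun l => ?_⟩
  by_contra! hl
  simp only [mem_insert, mem_filter, mem_univ, true_and, not_or, not_not] at hl
  have hτ : τ (f l) = 0 := (hτσ _ hl.1).trans hl.2
  exact hf ((prod_eq_zero (mem_univ l) hτ).trans (prod_eq_zero (mem_univ l) hl.2).symm)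

variable [DecidableEq ι]

theorem card_filter_exists_eq_forall_mem_le (S : Finset κ) (i : κ) :
    #{f : ι → κ | ∃ l₀, f l₀ = i ∧ ∀ l, f l ∈ S} ≤
      Fintype.card ι * #S ^ (Fintype.card ι - 1) := by
  have hsub : ({f : ι → κ | ∃ l₀, f l₀ = i ∧ ∀ l, f l ∈ S} : Finset (ι → κ)) ⊆
      univ.biUnion fun l₀ => Fintype.piFinset (Function.update (fun _ => S) l₀ {i}) := by
    intro f hf
    obtain ⟨l₀, hl₀, hS⟩ := (mem_filter.mp hf).2
    refine mem_biUnion.mpr ⟨l₀, mem_univ _, Fintype.mem_piFinset.mpr fun l => ?_⟩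
    rcases eq_or_ne l l₀ with rfl | hl
    · simp [hl₀]
    · simpa [hl] using hS l
  have hcard (l₀ : ι) :
      #(Fintype.piFinset (Function.update (fun _ => S) l₀ {i})) = #S ^ (Fintype.card ι - 1) := by
    rw [Fintype.card_piFinset, ← mul_prod_erase univ _ (mem_univ l₀),
      prod_congr rfl fun l hl => by rw [Function.update_of_ne (ne_of_mem_erase hl)]]
    simp [card_erase_of_mem]
  calc _ ≤ _ := card_le_card hsub
    _ ≤ ∑ l₀ : ι, #(Fintype.piFinset (Function.update (fun _ => S) l₀ {i})) := card_biUnion_le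
    _ = _ := by simp [hcard]

theorem sum_sq_sub_prod_le (hσ : ∀ m, σ m = -1 ∨ σ m = 0 ∨ σ m = 1)
    (hτ : ∀ m, τ m = -1 ∨ τ m = 0 ∨ τ m = 1) (hτσ : ∀ m ≠ i, τ m = σ m) :
    ∑ f : ι → κ, (∏ l, τ (f l) - ∏ l, σ (f l)) ^ 2 ≤
      4 * (τ i - σ i) ^ 2 *
        (Fintype.card ι * (#{m | σ m ≠ 0} + 1) ^ (Fintype.card ι - 1) : ℕ) := by
  set T : Finset (ι → κ) := {f | ∃ l₀, f l₀ = i ∧ ∀ l, f l ∈ insert i ({m | σ m ≠ 0} : Finset κ)}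
  have hpt (f : ι → κ) :
      (∏ l, τ (f l) - ∏ l, σ (f l)) ^ 2 ≤ if f ∈ T then 4 * (τ i - σ i) ^ 2 else 0 := by
    by_cases hf : ∏ l, τ (f l) = ∏ l, σ (f l)
    · rw [hf, sub_self, sq, zero_mul]
      split_ifs <;> positivity
    have hfT : f ∈ T := mem_filter.mpr ⟨mem_univ _, exists_eq_forall_mem_of_prod_ne hτσ hf⟩
    have hi : τ i ≠ σ i := by
      intro hi
      have : τ = σ := funext fun m => (eq_or_ne m i).elim (· ▸ hi) (hτσ m)
      exact hf (by rw [this])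
    have hsq : 1 ≤ (τ i - σ i) ^ 2 := one_le_sq_iff_one_le_abs _ |>.mpr <|
      one_le_abs_sub_of_trit (hτ i) (hσ i) hi
    have h4 := sq_sub_le_four (abs_prod_comp_le_one (abs_le_one_of_trit <| hτ ·) f)
      (abs_prod_comp_le_one (abs_le_one_of_trit <| hσ ·) f)
    rw [if_pos hfT]
    nlinarith
  have hT : #T ≤ Fintype.card ι * (#{m | σ m ≠ 0} + 1) ^ (Fintype.card ι - 1) :=
    (card_filter_exists_eq_forall_mem_le _ i).trans (by gcongr; exact card_insert_le _ _)
  calc _ ≤ ∑ f : ι → κ, if f ∈ T then 4 * (τ i - σ i) ^ 2 else 0 := sum_le_sum fun f _ => hpt f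
    _ = 4 * (τ i - σ i) ^ 2 * #T := by
      rw [sum_ite_mem, univ_inter, sum_const, nsmul_eq_mul, mul_comm]
    _ ≤ _ := by gcongr

end Counting

theorem stmt_17_general (n r : ℕ) (hr : 2 ≤ r)
    (σ : Fin n → ℝ) (hσ : ∀ m, σ m = -1 ∨ σ m = 0 ∨ σ m = 1) (hσ0 : σ ≠ 0)
    (i : Fin n) (a : ℝ)
    (hσa : ∀ m, (σ m + if m = i then a else 0) = -1 ∨
        (σ m + if m = i then a else 0) = 0 ∨ (σ m + if m = i then a else 0) = 1) :
    Real.sqrt (∑ f : Fin r → Fin n,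
        ((∏ l : Fin r, (σ (f l) + if f l = i then a else 0)) -
          (∏ l : Fin r, σ (f l))) ^ 2) ≤
      CNoise r * |a| * (suppCard σ : ℝ) ^ (((r : ℝ) - 1) / 2) := by
  have hr1 : 1 ≤ r := by omega
  have hs : 1 ≤ suppCard σ := by
    obtain ⟨m, hm⟩ := Function.ne_iff.mp hσ0
    exact card_pos.mpr ⟨m, by simpa using hm⟩
  have hsum := sum_sq_sub_prod_le (ι := Fin r) (τ := fun m => σ m + if m = i then a else 0)
    (i := i) hσ hσa fun m hm => by simp [hm]
  simp only [Fintype.card_fin, if_true, add_sub_cancel_left] at hsum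
  have hcount : (4 * r * (suppCard σ + 1) ^ (r - 1) : ℝ) ≤ 4 ^ r * suppCard σ ^ (r - 1) := by
    exact_mod_cast four_mul_mul_succ_pow_le r _ hs
  rw [Real.sqrt_le_left (by rw [CNoise]; positivity)]
  calc _ ≤ 4 * a ^ 2 * (r * (suppCard σ + 1) ^ (r - 1) : ℕ) := hsum
    _ = a ^ 2 * (4 * r * (suppCard σ + 1) ^ (r - 1)) := by push_cast; ring
    _ ≤ a ^ 2 * (4 ^ r * suppCard σ ^ (r - 1)) := by gcongr
    _ ≤ a ^ 2 * (CNoise r ^ 2 * suppCard σ ^ (r - 1)) := by gcongr; exact four_pow_le_CNoise_sq hr1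
    _ = _ := by
      rw [mul_pow, mul_pow, sq_abs, rpow_sub_one_div_two_sq (Nat.cast_nonneg _) hr1]
      ring

/-- for σ ∈ {−1,0,1}^n \ {0} and a ∈ ℝ with σ + a e_i ∈ {−1,0,1}^n,
‖(σ + a e_i)^{⊗r} − σ^{⊗r}‖_F ≤ C_Noise · |a| · ‖σ‖₀^{(r−1)/2}. -/
theorem stmt_17 (n r : ℕ) (hn : 1 ≤ n) (hr : 2 ≤ r)
    (σ : Fin n → ℝ) (hσ : ∀ m, σ m = -1 ∨ σ m = 0 ∨ σ m = 1) (hσ0 : σ ≠ 0)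
    (i : Fin n) (a : ℝ)
    (hσa : ∀ m, (σ m + if m = i then a else 0) = -1 ∨
        (σ m + if m = i then a else 0) = 0 ∨ (σ m + if m = i then a else 0) = 1) :
    Real.sqrt (∑ f : Fin r → Fin n,
        ((∏ l : Fin r, (σ (f l) + if f l = i then a else 0)) -
          (∏ l : Fin r, σ (f l))) ^ 2) ≤
      CNoise r * |a| * (suppCard σ : ℝ) ^ (((r : ℝ) - 1) / 2) :=
  stmt_17_general n r hr σ hσ hσ0 i a hσa
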